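/- arXiv:1705.01000 — 2 statements merged into one kernel-verified Lean document; each statement's English description precedes it below -/
import Mathlib

section
/- If a Boolean algebra B of subsets of a set S has a fragmentation {C_n} such that each C_n has a positive intersection number, then B carries a strictly positive finitely additive measure. -/
universe u

/-- A Boolean algebra of subsets of `S`: a collection of subsets containing
`∅` and closed under union and complement. -/
structure IsSetBooleanAlgebra {S : Type u} (B : Set (Set S)) : Prop where
  empty_mem : ∅ ∈ B
  union_mem : ∀ a b : Set S, a ∈ B → b ∈ B → a ∪ b ∈ B
  compl_mem : ∀ a : Set S, a ∈ B → aᶜ ∈ B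

/-- A finitely additive (probability) measure on a Boolean set algebra `B`. -/
structure IsFinAddMeasureOn {S : Type u} (B : Set (Set S)) (m : Set S → ℝ) : Prop where
  map_empty : m ∅ = 0
  map_univ : m Set.univ = 1
  nonneg : ∀ a ∈ B, 0 ≤ m a
  mono : ∀ a ∈ B, ∀ b ∈ B, a ⊆ b → m a ≤ m b
  add : ∀ a ∈ B, ∀ b ∈ B, a ∩ b = ∅ → m (a ∪ b) = m a + m b

/-- The largest size of a set `J ⊆ {1,…,n}` of indices such that
`⋂_{i ∈ J} c_i` is nonempty. -/
noncomputable def maxInterCard {S : Type u} (n : ℕ) (c : Fin n → Set S) : ℕ :=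
  sSup {k : ℕ | ∃ J : Finset (Fin n), J.card = k ∧ (⋂ i ∈ J, c i).Nonempty}

/-- The number `κ_s = k/n` associated to the finite sequence
`s = ⟨c_1,…,c_n⟩`, where `k` is the largest size of a set `J ⊆ {1,…,n}` with
`⋂_{i ∈ J} c_i ≠ ∅`. The intersection number of a family `C` is the infimum
of `kappa n c` over all finite sequences `c` in `C`. -/
noncomputable def kappa {S : Type u} (n : ℕ) (c : Fin n → Set S) : ℝ :=
  (maxInterCard n c : ℝ) / (n : ℝ)

/-- `κ` is a lower bound for the intersection number of `C`, i.e.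
`κ ≤ κ_s` for every finite sequence `s` in `C`. (The intersection number of
`C` is at least `κ`.) -/
def InterNumberLB {S : Type u} (C : Set (Set S)) (κ : ℝ) : Prop :=
  ∀ n : ℕ, 0 < n → ∀ c : Fin n → Set S, (∀ i, c i ∈ C) → κ ≤ kappa n c

/-- A fragmentation of a Boolean set algebra `B`: an increasing sequence of
subsets of `B ∖ {∅}`, each upward closed in `B`, whose union is `B ∖ {∅}`. -/
structure IsSetFragmentation {S : Type u} (B : Set (Set S)) (C : ℕ → Set (Set S)) : Prop where
  mono : ∀ n, C n ⊆ C (n + 1)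
  subset : ∀ n, C n ⊆ B \ {∅}
  upward : ∀ n : ℕ, ∀ a ∈ C n, ∀ b ∈ B, a ⊆ b → b ∈ C n
  covers : ∀ a ∈ B, a ≠ ∅ → ∃ n, a ∈ C n

/-!
Each `C n` alone carries a finitely additive probability measure `μ n` on all subsets of `S`
with `κ n ≤ μ n a` for `a ∈ C n` (Kelley's theorem), and `∑ 2⁻⁽ⁿ⁺¹⁾ μ n` is then positive on
every nonempty `a ∈ B`, because such an `a` lies in some `C n`.

For Kelley's theorem, the bound on the intersection number, applied to sequences with
repetitions, says that every combination `∑ λᵢ (𝟙 aᵢ - κ)` with `λᵢ ≥ 0` and `aᵢ ∈ C` has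
supremum `≥ 0` (real weights are approximated by integer ones). So `c • 1 ↦ c` is nonnegative
on the cone of bounded functions dominating such a combination, the M. Riesz extension theorem
extends it to a positive functional on `ℓ^∞(S)`, and its values on indicators form the measure.
-/

open Finset
open scoped ENNReal lp

section Kelley

variable {S : Type u} {C : Set (Set S)} {κ : ℝ}

theorem exists_maxInterCard_le_sum_indicator [Nonempty S] (n : ℕ) (c : Fin n → Set S) :
    ∃ x, (maxInterCard n c : ℝ) ≤ ∑ i, (c i).indicator 1 x := by
  have hne : {k | ∃ J : Finset (Fin n), J.card = k ∧ (⋂ i ∈ J, c i).Nonempty}.Nonempty :=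
    ⟨0, ∅, rfl, by simp⟩
  have hbdd : BddAbove {k | ∃ J : Finset (Fin n), J.card = k ∧ (⋂ i ∈ J, c i).Nonempty} :=
    ⟨n, by rintro _ ⟨J, rfl, -⟩; simpa using J.card_le_univ⟩
  obtain ⟨J, hJ, x, hx⟩ := Nat.sSup_mem hne hbdd
  refine ⟨x, ?_⟩
  calc (maxInterCard n c : ℝ) = ∑ i ∈ J, (c i).indicator 1 x := by
        rw [maxInterCard, ← hJ, card_eq_sum_ones, Nat.cast_sum]
        exact sum_congr rfl fun i hi => by simp [Set.mem_iInter₂.1 hx i hi]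
    _ ≤ ∑ i, (c i).indicator 1 x :=
        sum_le_sum_of_subset_of_nonneg (subset_univ J) fun i _ _ => Set.indicator_nonneg (by simp) x

theorem InterNumberLB.exists_mul_card_le_sum_indicator [Nonempty S] (h : InterNumberLB C κ)
    {ι : Type*} [Fintype ι] (c : ι → Set S) (hc : ∀ i, c i ∈ C) :
    ∃ x, κ * Fintype.card ι ≤ ∑ i, (c i).indicator 1 x := by
  rcases Nat.eq_zero_or_pos (Fintype.card ι) with hempty | hne
  · obtain ⟨x⟩ := ‹Nonempty S›
    exact ⟨x, by simp [Fintype.card_eq_zero_iff.1 hempty]⟩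
  set e := Fintype.equivFin ι
  have hκ := h _ hne (c ∘ e.symm) fun i => hc _
  rw [kappa, le_div_iff₀ (by exact_mod_cast hne)] at hκ
  obtain ⟨x, hx⟩ := exists_maxInterCard_le_sum_indicator _ (c ∘ e.symm)
  exact ⟨x, hκ.trans (hx.trans_eq (e.symm.sum_comp fun i => (c i).indicator 1 x))⟩

theorem InterNumberLB.exists_mul_sum_le_sum_mul_indicator [Nonempty S] (h : InterNumberLB C κ)
    {ι : Type*} [Fintype ι] (c : ι → Set S) (hc : ∀ i, c i ∈ C) (k : ι → ℕ) :
    ∃ x, κ * ∑ i, (k i : ℝ) ≤ ∑ i, (k i : ℝ) * (c i).indicator 1 x := by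
  obtain ⟨x, hx⟩ := h.exists_mul_card_le_sum_indicator (fun p : Σ i, Fin (k i) => c p.1)
    fun p => hc p.1
  refine ⟨x, ?_⟩
  simpa [Fintype.sum_sigma] using hx

theorem InterNumberLB.exists_neg_le_sum_mul_indicator_sub [Nonempty S] (h : InterNumberLB C κ)
    (hκ : 0 ≤ κ) {ι : Type*} [Fintype ι] (c : ι → Set S) (hc : ∀ i, c i ∈ C) (w : ι → ℝ)
    (hw : ∀ i, 0 ≤ w i) {ε : ℝ} (hε : 0 < ε) :
    ∃ x, -ε ≤ ∑ i, w i * ((c i).indicator 1 x - κ) := by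
  obtain ⟨M, hM⟩ := exists_nat_gt (Fintype.card ι / ε)
  have hM0 : (0 : ℝ) < M := (div_nonneg (Nat.cast_nonneg _) hε.le).trans_lt hM
  rw [div_lt_iff₀ hε] at hM
  -- round the weights up to multiples of `1 / M`
  set k : ι → ℕ := fun i => ⌈M * w i⌉₊
  obtain ⟨x, hx⟩ := h.exists_mul_sum_le_sum_mul_indicator c hc k
  refine ⟨x, ?_⟩
  set I : ι → ℝ := fun i => (c i).indicator 1 x
  have hI : ∀ i, 0 ≤ I i ∧ I i ≤ 1 := fun i => by
    by_cases hxi : x ∈ c i <;> simp [I, hxi]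
  have hround : ∑ i, (k i : ℝ) * I i ≤ M * ∑ i, w i * I i + Fintype.card ι := by
    rw [mul_sum, Fintype.card_eq_sum_ones, Nat.cast_sum, Nat.cast_one, ← sum_add_distrib]
    refine sum_le_sum fun i _ => ?_
    have hk : (k i : ℝ) ≤ M * w i + 1 := (Nat.ceil_lt_add_one (mul_nonneg hM0.le (hw i))).le
    nlinarith [mul_le_mul_of_nonneg_right hk (hI i).1, hI i]
  have hκk : κ * (M * ∑ i, w i) ≤ κ * ∑ i, (k i : ℝ) := by
    rw [mul_sum]
    exact mul_le_mul_of_nonneg_left (sum_le_sum fun i _ => Nat.le_ceil _) hκ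
  have hexpand : ∑ i, w i * (I i - κ) = ∑ i, w i * I i - κ * ∑ i, w i := by
    rw [mul_sum, ← sum_sub_distrib]
    exact sum_congr rfl fun i _ => by ring
  rw [hexpand]
  refine le_of_mul_le_mul_left ?_ hM0
  nlinarith

theorem InterNumberLB.exists_neg_le_of_mem_hull [Nonempty S] (h : InterNumberLB C κ)
    (hκ : 0 ≤ κ) {g : S → ℝ}
    (hg : g ∈ PointedCone.hull ℝ ((fun a => a.indicator 1 - Function.const S κ) '' C))
    {ε : ℝ} (hε : 0 < ε) : ∃ x, -ε ≤ g x := by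
  obtain ⟨t, htC, w, rfl⟩ := Submodule.mem_span_image_iff_exists_fun _ |>.1 hg
  obtain ⟨x, hx⟩ := h.exists_neg_le_sum_mul_indicator_sub hκ (fun a : t => (a : Set S))
    (fun a => htC a.2) (fun a => w a) (fun a => (w a).2) hε
  exact ⟨x, by simpa [← Nonneg.coe_smul] using hx⟩

noncomputable def indicatorLp (a : Set S) : ℓ^∞(S, ℝ) :=
  ⟨a.indicator 1, memℓp_infty ⟨1, by
    rintro _ ⟨x, rfl⟩
    by_cases hx : x ∈ a <;> simp [hx]⟩⟩

@[simp]
theorem coe_indicatorLp (a : Set S) : ⇑(indicatorLp a) = a.indicator 1 := rfl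

@[simp]
theorem indicatorLp_empty : indicatorLp (∅ : Set S) = 0 :=
  lp.ext <| funext fun x => by simp

@[simp]
theorem indicatorLp_univ : indicatorLp (Set.univ : Set S) = 1 :=
  lp.ext <| funext fun x => by simp [lp.infty_coeFn_one]

theorem indicatorLp_union {a b : Set S} (hab : a ∩ b = ∅) :
    indicatorLp (a ∪ b) = indicatorLp a + indicatorLp b :=
  lp.ext <| funext fun x => by
    rw [lp.coeFn_add, Pi.add_apply]
    simp [Set.indicator_union_of_disjoint (Set.disjoint_iff_inter_eq_empty.2 hab)]

def PointedCone.dominating (G : PointedCone ℝ (S → ℝ)) : PointedCone ℝ (ℓ^∞(S, ℝ)) where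
  carrier := {f | ∃ g ∈ G, g ≤ ⇑f}
  zero_mem' := ⟨0, G.zero_mem, le_rfl⟩
  add_mem' := by
    rintro f₁ f₂ ⟨g₁, hg₁, h₁⟩ ⟨g₂, hg₂, h₂⟩
    exact ⟨g₁ + g₂, G.add_mem hg₁ hg₂, fun x => by simpa using add_le_add (h₁ x) (h₂ x)⟩
  smul_mem' := by
    rintro c f ⟨g, hg, hgf⟩
    exact ⟨c • g, Submodule.smul_mem G c hg, fun x => by
      simpa [← Nonneg.coe_smul] using mul_le_mul_of_nonneg_left (hgf x) c.2⟩

theorem PointedCone.exists_positive_functional_dominating [Nonempty S] {G : PointedCone ℝ (S → ℝ)}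
    (hG : ∀ g ∈ G, ∀ ε > 0, ∃ x, -ε ≤ g x) :
    ∃ φ : ℓ^∞(S, ℝ) →ₗ[ℝ] ℝ, φ 1 = 1 ∧ ∀ f ∈ G.dominating, 0 ≤ φ f := by
  have hone : (1 : ℓ^∞(S, ℝ)) ≠ 0 := fun h => by
    obtain ⟨x⟩ := ‹Nonempty S›
    simpa using congrFun (congrArg (⇑) h) x
  set φ₀ : ℓ^∞(S, ℝ) →ₗ.[ℝ] ℝ := LinearPMap.mkSpanSingleton 1 1 hone
  have hφ₀ : ∀ f : φ₀.domain, ∃ c : ℝ, (f : ℓ^∞(S, ℝ)) = c • 1 ∧ φ₀ f = c := by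
    rintro ⟨f, hf⟩
    obtain ⟨c, rfl⟩ := Submodule.mem_span_singleton.1 hf
    exact ⟨c, rfl, (LinearPMap.mkSpanSingleton'_apply _ _ _ c hf).trans (by simp)⟩
  have hnonneg : ∀ f : φ₀.domain, (f : ℓ^∞(S, ℝ)) ∈ G.dominating → 0 ≤ φ₀ f := by
    rintro f ⟨g, hg, hgf⟩
    obtain ⟨c, hfc, hφc⟩ := hφ₀ f
    rw [hφc]
    refine le_of_forall_pos_le_add fun ε hε => ?_
    obtain ⟨x, hx⟩ := hG g hg ε hε
    have hgx := hgf x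
    rw [hfc, lp.coeFn_smul, lp.infty_coeFn_one, Pi.smul_apply, Pi.one_apply, smul_eq_mul,
      mul_one] at hgx
    linarith
  have hdense : ∀ f, ∃ f₀ : φ₀.domain, (f₀ : ℓ^∞(S, ℝ)) + f ∈ G.dominating := by
    intro f
    refine ⟨⟨‖f‖ • 1, Submodule.smul_mem _ _ (Submodule.mem_span_singleton_self _)⟩, 0, G.zero_mem,
      fun x => ?_⟩
    have := lp.norm_apply_le_norm ENNReal.top_ne_zero f x
    simp only [Real.norm_eq_abs, abs_le] at this
    show 0 ≤ (‖f‖ • (1 : ℓ^∞(S, ℝ)) + f) x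
    rw [lp.coeFn_add, lp.coeFn_smul, lp.infty_coeFn_one, Pi.add_apply, Pi.smul_apply,
      Pi.one_apply, smul_eq_mul, mul_one]
    linarith
  obtain ⟨φ, hφφ₀, hφ⟩ := riesz_extension G.dominating φ₀ hnonneg hdense
  refine ⟨φ, ?_, hφ⟩
  rw [hφφ₀ ⟨1, Submodule.mem_span_singleton_self _⟩]
  exact LinearPMap.mkSpanSingleton_apply ℝ ℝ hone 1

theorem InterNumberLB.exists_finAddMeasure [Nonempty S] (h : InterNumberLB C κ) (hκ : 0 ≤ κ) :
    ∃ m : Set S → ℝ, IsFinAddMeasureOn Set.univ m ∧ ∀ a ∈ C, κ ≤ m a := by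
  obtain ⟨φ, hφ1, hφ⟩ := PointedCone.exists_positive_functional_dominating fun g hg ε hε =>
    h.exists_neg_le_of_mem_hull hκ hg hε
  have hmono : ∀ a b : Set S, a ⊆ b → φ (indicatorLp a) ≤ φ (indicatorLp b) := fun a b hab => by
    have := hφ (indicatorLp b - indicatorLp a) ⟨0, zero_mem _, fun x => ?_⟩
    · simpa using this
    rw [lp.coeFn_sub, Pi.sub_apply]
    simpa using Set.indicator_le_indicator_of_subset hab (by simp) x
  refine ⟨fun a => φ (indicatorLp a), ⟨?_, ?_, ?_, ?_, ?_⟩, ?_⟩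
  · simp
  · simpa using hφ1
  · exact fun a _ => by simpa using hmono ∅ a (Set.empty_subset a)
  · exact fun a _ b _ => hmono a b
  · exact fun a _ b _ hab => by simp [indicatorLp_union hab]
  · intro a ha
    have := hφ (indicatorLp a - κ • 1) ⟨a.indicator 1 - Function.const S κ,
      PointedCone.subset_hull ⟨a, ha, rfl⟩, fun x => ?_⟩
    · simpa [hφ1] using this
    rw [lp.coeFn_sub, lp.coeFn_smul, lp.infty_coeFn_one]
    simp

end Kelley

namespace IsFinAddMeasureOn

variable {S : Type u} {B : Set (Set S)} {m : Set S → ℝ}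

theorem mono_set (h : IsFinAddMeasureOn B m) {B' : Set (Set S)} (hB' : B' ⊆ B) :
    IsFinAddMeasureOn B' m where
  map_empty := h.map_empty
  map_univ := h.map_univ
  nonneg a ha := h.nonneg a (hB' ha)
  mono a ha b hb := h.mono a (hB' ha) b (hB' hb)
  add a ha b hb := h.add a (hB' ha) b (hB' hb)

theorem le_one (h : IsFinAddMeasureOn B m) (hU : Set.univ ∈ B) {a : Set S} (ha : a ∈ B) :
    m a ≤ 1 :=
  h.map_univ ▸ h.mono a ha _ hU (Set.subset_univ a)

variable {ι : Type*} {μ : ι → Set S → ℝ} {w : ι → ℝ}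

theorem summable_mul (hμ : ∀ i, IsFinAddMeasureOn B (μ i)) (hU : Set.univ ∈ B)
    (hw0 : ∀ i, 0 ≤ w i) (hw : Summable w) {a : Set S} (ha : a ∈ B) :
    Summable fun i => w i * μ i a :=
  hw.of_nonneg_of_le (fun i => mul_nonneg (hw0 i) ((hμ i).nonneg a ha))
    fun i => mul_le_of_le_one_right (hw0 i) ((hμ i).le_one hU ha)

theorem tsum_mul (hμ : ∀ i, IsFinAddMeasureOn B (μ i)) (hU : Set.univ ∈ B)
    (hw0 : ∀ i, 0 ≤ w i) (hw : HasSum w 1) :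
    IsFinAddMeasureOn B fun a => ∑' i, w i * μ i a where
  map_empty := by simp [fun i => (hμ i).map_empty]
  map_univ := by simpa [fun i => (hμ i).map_univ] using hw.tsum_eq
  nonneg a ha := tsum_nonneg fun i => mul_nonneg (hw0 i) ((hμ i).nonneg a ha)
  mono a ha b hb hab :=
    (summable_mul hμ hU hw0 hw.summable ha).tsum_le_tsum
      (fun i => mul_le_mul_of_nonneg_left ((hμ i).mono a ha b hb hab) (hw0 i))
      (summable_mul hμ hU hw0 hw.summable hb)
  add a ha b hb hab := by
    simp only [(hμ _).add a ha b hb hab, mul_add]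
    exact (summable_mul hμ hU hw0 hw.summable ha).tsum_add (summable_mul hμ hU hw0 hw.summable hb)

end IsFinAddMeasureOn

theorem strictlyPositive_finAddMeasure_of_fragmentation_general {S : Type u} [Nonempty S]
    (B : Set (Set S))
    (C : ℕ → Set (Set S)) (hfrag : IsSetFragmentation B C)
    (hpos : ∀ n : ℕ, ∃ κ : ℝ, 0 < κ ∧ InterNumberLB (C n) κ) :
    ∃ m : Set S → ℝ, IsFinAddMeasureOn B m ∧ ∀ a ∈ B, a ≠ ∅ → 0 < m a := by
  choose κ hκ hC using hpos
  choose μ hμ hμC using fun n => (hC n).exists_finAddMeasure (hκ n).le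
  have hw0 : ∀ n : ℕ, 0 ≤ (1 : ℝ) / 2 / 2 ^ n := fun n => by positivity
  have hw := hasSum_geometric_two' 1
  refine ⟨fun a => ∑' n, 1 / 2 / 2 ^ n * μ n a,
    (IsFinAddMeasureOn.tsum_mul hμ (Set.mem_univ _) hw0 hw).mono_set (Set.subset_univ B),
    fun a ha hne => ?_⟩
  obtain ⟨n, hn⟩ := hfrag.covers a ha hne
  have hsum := IsFinAddMeasureOn.summable_mul hμ (Set.mem_univ _) hw0 hw.summable (Set.mem_univ a)
  exact hsum.tsum_pos (fun k => mul_nonneg (hw0 k) ((hμ k).nonneg a (Set.mem_univ a))) n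
    (mul_pos (by positivity) ((hκ n).trans_le (hμC n a hn)))

/-- If a Boolean set algebra `B` has a fragmentation `{C_n}` such that each
`C_n` has a positive intersection number, then `B` carries a strictly positive
finitely additive measure. -/
theorem strictlyPositive_finAddMeasure_of_fragmentation {S : Type u} [Nonempty S]
    (B : Set (Set S)) (hB : IsSetBooleanAlgebra B)
    (C : ℕ → Set (Set S)) (hfrag : IsSetFragmentation B C)
    (hpos : ∀ n : ℕ, ∃ κ : ℝ, 0 < κ ∧ InterNumberLB (C n) κ) :
    ∃ m : Set S → ℝ, IsFinAddMeasureOn B m ∧ ∀ a ∈ B, a ≠ ∅ → 0 < m a :=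
  strictlyPositive_finAddMeasure_of_fragmentation_general B C hfrag hpos
end

section
/- Let B be a Boolean algebra of subsets of a set S and let C ⊆ B∖{∅} have intersection number κ. Then every convex combination g = Σ_{i=1}^m α_i K_{c_i} of characteristic functions of elements c_i ∈ C (where 0 ≤ α_i ≤ 1 and Σ_i α_i = 1, and K_c(x) = 1 if x ∈ c and 0 otherwise) satisfies sup_{x∈S} |g(x)| ≥ κ. -/
universe u

open scoped Classical

/-- If `C ⊆ B ∖ {∅}` has intersection number `κ`, then every convex
combination `g = Σ_i α_i K_{c_i}` of characteristic functions of members of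
`C` satisfies `sup_{x ∈ S} |g(x)| ≥ κ`. -/
theorem kelley_convex_combination_norm {S : Type u} [Nonempty S]
    (B : Set (Set S)) (hB : IsSetBooleanAlgebra B)
    (C : Set (Set S)) (hC : C ⊆ B \ {∅})
    (κ : ℝ) (hκ : InterNumberLB C κ)
    (m : ℕ) (hm : 0 < m) (a : Fin m → ℝ) (c : Fin m → Set S)
    (hc : ∀ i, c i ∈ C)
    (ha0 : ∀ i, 0 ≤ a i) (ha1 : ∀ i, a i ≤ 1) (hsum : ∑ i, a i = 1) :
    κ ≤ ⨆ x : S, |∑ i, a i * (if x ∈ c i then (1 : ℝ) else 0)| := by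
  set g : S → ℝ := fun x => ∑ i, a i * (if x ∈ c i then (1 : ℝ) else 0) with hg
  have hgle : ∀ x, |g x| ≤ 1 := by
    intro x
    have h1 : |g x| ≤ ∑ i, |a i * (if x ∈ c i then (1 : ℝ) else 0)| :=
      Finset.abs_sum_le_sum_abs _ _
    have h2 : ∀ i ∈ Finset.univ, |a i * (if x ∈ c i then (1 : ℝ) else 0)| ≤ a i := by
      intro i _
      rw [abs_mul, abs_of_nonneg (ha0 i)]
      have : |(if x ∈ c i then (1 : ℝ) else 0)| ≤ 1 := by
        split <;> simp
      nlinarith [ha0 i]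
    calc |g x| ≤ ∑ i, |a i * (if x ∈ c i then (1 : ℝ) else 0)| := h1
      _ ≤ ∑ i, a i := Finset.sum_le_sum h2
      _ = 1 := hsum
  have hbdd : BddAbove (Set.range fun x : S => |g x|) := by
    refine ⟨1, ?_⟩
    rintro y ⟨x, rfl⟩
    exact hgle x
  set T : ℝ := ⨆ x : S, |g x| with hT
  have hTle : ∀ x : S, |g x| ≤ T := fun x => le_ciSup hbdd x
  refine le_of_forall_pos_le_add ?_
  intro ε hε
  -- choose N with m / ε < N
  obtain ⟨N, hN⟩ := exists_nat_gt ((m : ℝ) / ε)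
  have hmε : (0 : ℝ) < (m : ℝ) / ε := div_pos (by exact_mod_cast hm) hε
  have hN0 : (0 : ℝ) < N := lt_trans hmε hN
  have hNnat : 0 < N := by exact_mod_cast hN0
  have hmN : (m : ℝ) / N ≤ ε := by
    rw [div_le_iff₀ hN0]
    have : (m : ℝ) < ε * N := by
      have := (div_lt_iff₀ hε).mp hN
      linarith
    linarith
  -- repetition counts
  set nn : Fin m → ℕ := fun i => ⌈(N : ℝ) * a i⌉₊ with hnn
  have hnn_ge : ∀ i, (N : ℝ) * a i ≤ nn i := fun i => Nat.le_ceil _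
  have hnn_le : ∀ i, (nn i : ℝ) ≤ (N : ℝ) * a i + 1 := by
    intro i
    have h := Nat.ceil_lt_add_one (mul_nonneg hN0.le (ha0 i))
    exact le_of_lt h
  set M : ℕ := Fintype.card (Σ i : Fin m, Fin (nn i)) with hM
  have hMsum : M = ∑ i, nn i := by
    simp [hM, Fintype.card_sigma]
  have hNM : (N : ℝ) ≤ (M : ℝ) := by
    rw [hMsum]
    push_cast
    calc (N : ℝ) = ∑ i, (N : ℝ) * a i := by rw [← Finset.mul_sum, hsum, mul_one]
      _ ≤ ∑ i, (nn i : ℝ) := Finset.sum_le_sum fun i _ => hnn_ge i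
  have hM0 : 0 < M := by
    have : (0 : ℝ) < M := lt_of_lt_of_le hN0 hNM
    exact_mod_cast this
  -- the sequence
  set e : (Σ i : Fin m, Fin (nn i)) ≃ Fin M := Fintype.equivFin _ with he
  set f : Fin M → Set S := fun j => c (e.symm j).1 with hf
  have hfC : ∀ j, f j ∈ C := fun j => hc _
  have hκf := hκ M hM0 f hfC
  -- analyze maxInterCard
  set k : ℕ := maxInterCard M f with hk
  have hkmem : k ∈ {k : ℕ | ∃ J : Finset (Fin M), J.card = k ∧ (⋂ i ∈ J, f i).Nonempty} := by
    apply Nat.sSup_mem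
    · refine ⟨0, ∅, rfl, ?_⟩
      simp only [Finset.notMem_empty, Set.iInter_of_empty, Set.iInter_univ]
      exact Set.univ_nonempty
    · refine ⟨M, ?_⟩
      rintro k' ⟨J, rfl, -⟩
      simpa using J.card_le_univ
  obtain ⟨J, hJcard, x, hx⟩ := hkmem
  have hxmem : ∀ j ∈ J, x ∈ f j := by
    intro j hj
    exact Set.mem_iInter₂.mp hx j hj
  -- count: k ≤ ∑ j, ind(x ∈ f j)
  have hcount1 : (k : ℝ) ≤ ∑ j : Fin M, (if x ∈ f j then (1 : ℝ) else 0) := by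
    rw [← hJcard]
    have h1 : (J.card : ℝ) = ∑ j ∈ J, (if x ∈ f j then (1 : ℝ) else 0) := by
      rw [Finset.card_eq_sum_ones]
      push_cast
      refine Finset.sum_congr rfl ?_
      intro j hj
      simp [hxmem j hj]
    rw [h1]
    refine Finset.sum_le_sum_of_subset_of_nonneg (Finset.subset_univ J) ?_
    intro j _ _
    split <;> norm_num
  have hcount2 : ∑ j : Fin M, (if x ∈ f j then (1 : ℝ) else 0)
      = ∑ i, (nn i : ℝ) * (if x ∈ c i then (1 : ℝ) else 0) := by
    have h1 : ∑ j : Fin M, (if x ∈ f j then (1 : ℝ) else 0)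
        = ∑ p : Σ i : Fin m, Fin (nn i), (if x ∈ c p.1 then (1 : ℝ) else 0) := by
      rw [← Equiv.sum_comp e (fun p : Fin M => if x ∈ f p then (1:ℝ) else 0)]
      refine Finset.sum_congr rfl fun p _ => ?_
      simp [hf]
    rw [h1, ← Finset.univ_sigma_univ, Finset.sum_sigma]
    refine Finset.sum_congr rfl fun i _ => ?_
    split <;> simp
  have hsum_ind : ∑ i, (if x ∈ c i then (1 : ℝ) else 0) ≤ (m : ℝ) := by
    calc ∑ i, (if x ∈ c i then (1 : ℝ) else 0) ≤ ∑ i : Fin m, (1 : ℝ) := by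
          refine Finset.sum_le_sum fun i _ => ?_
          split <;> norm_num
      _ = m := by simp
  have hkey : (k : ℝ) ≤ (N : ℝ) * T + m := by
    have h2 : ∑ i, (nn i : ℝ) * (if x ∈ c i then (1 : ℝ) else 0)
        ≤ ∑ i, ((N : ℝ) * a i + 1) * (if x ∈ c i then (1 : ℝ) else 0) := by
      refine Finset.sum_le_sum fun i _ => ?_
      have hind : (0:ℝ) ≤ (if x ∈ c i then (1 : ℝ) else 0) := by split <;> norm_num
      exact mul_le_mul_of_nonneg_right (hnn_le i) hind
    have h3 : ∑ i, ((N : ℝ) * a i + 1) * (if x ∈ c i then (1 : ℝ) else 0)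
        = (N : ℝ) * g x + ∑ i, (if x ∈ c i then (1 : ℝ) else 0) := by
      rw [hg, Finset.mul_sum, ← Finset.sum_add_distrib]
      refine Finset.sum_congr rfl fun i _ => ?_
      ring
    have h4 : g x ≤ T := le_trans (le_abs_self _) (hTle x)
    have h5 : (N : ℝ) * g x ≤ (N : ℝ) * T := mul_le_mul_of_nonneg_left h4 (le_of_lt hN0)
    calc (k : ℝ) ≤ ∑ j : Fin M, (if x ∈ f j then (1 : ℝ) else 0) := hcount1
      _ = ∑ i, (nn i : ℝ) * (if x ∈ c i then (1 : ℝ) else 0) := hcount2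
      _ ≤ ∑ i, ((N : ℝ) * a i + 1) * (if x ∈ c i then (1 : ℝ) else 0) := h2
      _ = (N : ℝ) * g x + ∑ i, (if x ∈ c i then (1 : ℝ) else 0) := h3
      _ ≤ (N : ℝ) * T + m := add_le_add h5 hsum_ind
  have hk0 : (0 : ℝ) ≤ k := Nat.cast_nonneg k
  calc κ ≤ kappa M f := hκf
    _ = (k : ℝ) / M := rfl
    _ ≤ (k : ℝ) / N := div_le_div_of_nonneg_left hk0 hN0 hNM
    _ ≤ ((N : ℝ) * T + m) / N := by gcongr
    _ = T + (m : ℝ) / N := by field_simp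
    _ ≤ T + ε := by linarith
end
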